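/- Let ⟨[0,1], ⊕_p⟩ be a convex algebra satisfying (MO), (UC) and (LC), and assume that max E^⊕ < 1 (the maximum exists since E^⊕ is closed, nonempty, and contains 0). Then the interval [max E^⊕, 1] is closed under the operations ⊕_p and the algebra ⟨[max E^⊕, 1], ⊕_p⟩ is isomorphic to ⟨[0,1], +_p⟩, where x +_p y = px + (1−p)y. Moreover, there exist exactly two isomorphisms Φ : [0,1] → [max E^⊕, 1] (i.e. bijections with Φ(s +_p t) = Φ(s) ⊕_p Φ(t) for all s, t ∈ [0,1] and p ∈ (0,1)), one of which is strictly increasing and one strictly decreasing. -/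

import Mathlib

open Set Filter Topology

/-- A convex algebra on the interval `[0,1] ⊆ ℝ`: `op p x y` denotes `x ⊕_p y`,
for `p ∈ (0,1)`, extended to `p ∈ [0,1]` by the projection axioms
`x ⊕_1 y = x` and `x ⊕_0 y = y`.  All axioms are required only on `[0,1]`;
values of `op` outside `[0,1]` are irrelevant. -/
structure UCA where
  op : ℝ → ℝ → ℝ → ℝ
  mem : ∀ p ∈ Set.Icc (0:ℝ) 1, ∀ x ∈ Set.Icc (0:ℝ) 1, ∀ y ∈ Set.Icc (0:ℝ) 1,
      op p x y ∈ Set.Icc (0:ℝ) 1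
  idem : ∀ p ∈ Set.Ioo (0:ℝ) 1, ∀ x ∈ Set.Icc (0:ℝ) 1, op p x x = x
  comm : ∀ p ∈ Set.Ioo (0:ℝ) 1, ∀ x ∈ Set.Icc (0:ℝ) 1, ∀ y ∈ Set.Icc (0:ℝ) 1,
      op p x y = op (1 - p) y x
  assoc : ∀ p ∈ Set.Ioo (0:ℝ) 1, ∀ q ∈ Set.Ioo (0:ℝ) 1,
      ∀ x ∈ Set.Icc (0:ℝ) 1, ∀ y ∈ Set.Icc (0:ℝ) 1, ∀ z ∈ Set.Icc (0:ℝ) 1,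
      op q (op p x y) z = op (p * q) x (op ((1 - p) * q / (1 - p * q)) y z)
  proj1 : ∀ x ∈ Set.Icc (0:ℝ) 1, ∀ y ∈ Set.Icc (0:ℝ) 1, op 1 x y = x
  proj0 : ∀ x ∈ Set.Icc (0:ℝ) 1, ∀ y ∈ Set.Icc (0:ℝ) 1, op 0 x y = y

/-- Monotonicity (MO): `x ≤ x'` implies `x ⊕_p y ≤ x' ⊕_p y`. -/
def UCA.MO (A : UCA) : Prop :=
  ∀ x ∈ Set.Icc (0:ℝ) 1, ∀ x' ∈ Set.Icc (0:ℝ) 1, ∀ y ∈ Set.Icc (0:ℝ) 1,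
    ∀ p ∈ Set.Ioo (0:ℝ) 1, x ≤ x' → A.op p x y ≤ A.op p x' y

/-- (UC): for `x, y ∈ [0,1)` and `p ∈ (0,1)`,
`limsup_{ε→0⁺} ((x+ε) ⊕_p (y+ε)) ≤ x ⊕_p y`. -/
def UCA.UC (A : UCA) : Prop :=
  ∀ x ∈ Set.Ico (0:ℝ) 1, ∀ y ∈ Set.Ico (0:ℝ) 1, ∀ p ∈ Set.Ioo (0:ℝ) 1,
    Filter.limsup (fun ε => A.op p (x + ε) (y + ε)) (𝓝[>] (0:ℝ)) ≤ A.op p x y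

/-- (LC): for `x ≤ y` in `[0,1]`, `liminf_{p→1⁻} (y ⊕_p x) ≥ y`. -/
def UCA.LC (A : UCA) : Prop :=
  ∀ x ∈ Set.Icc (0:ℝ) 1, ∀ y ∈ Set.Icc (0:ℝ) 1, x ≤ y →
    y ≤ Filter.liminf (fun p => A.op p y x) (𝓝[<] (1:ℝ))

/-- `y ⊳ x` : `y` eats `x`, i.e. `y ⊕_t x = y` for all `t ∈ (0,1]`. -/
def UCA.Eats (A : UCA) (y x : ℝ) : Prop :=
  ∀ t ∈ Set.Ioc (0:ℝ) 1, A.op t y x = y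

/-- `E^⊕ = { y ∈ [0,1] : y ⊳ 0 }`. -/
def UCA.E (A : UCA) : Set ℝ := {y ∈ Set.Icc (0:ℝ) 1 | A.Eats y 0}

/-- `V_{x,y} = inf { y ⊕_p x : p ∈ (0,1] }`. -/
noncomputable def UCA.V (A : UCA) (x y : ℝ) : ℝ :=
  sInf ((fun p => A.op p y x) '' Set.Ioc (0:ℝ) 1)

/-- `Φ` is an isomorphism of `⟨[0,1], +_p⟩` (operations induced by linear combinations)
onto `⟨[max E^⊕, 1], ⊕_p⟩`, where `m = max E^⊕`: a bijection of `[0,1]` onto `[m,1]`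
with `Φ(s +_p t) = Φ(s) ⊕_p Φ(t)`. -/
def UCA.IsStdIso (A : UCA) (m : ℝ) (Φ : ℝ → ℝ) : Prop :=
  Set.BijOn Φ (Set.Icc (0:ℝ) 1) (Set.Icc m 1) ∧
  ∀ p ∈ Set.Ioo (0:ℝ) 1, ∀ s ∈ Set.Icc (0:ℝ) 1, ∀ t ∈ Set.Icc (0:ℝ) 1,
    Φ (p * s + (1 - p) * t) = A.op p (Φ s) (Φ t)

/-!
Let `m = max E^⊕` and `φ s = 1 ⊕_s m`. Parametric associativity gives
`(x ⊕_s y) ⊕_p (x ⊕_t y) = x ⊕_{ps+(1-p)t} y`, so `φ` is a homomorphism from `⟨[0,1], +_p⟩`,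
and (MO) makes it monotone with values in `[m, 1]`. It is strictly monotone: through the
homomorphism property a flat piece of `φ` spreads to all of `(0,1)`, (LC) forces the constant value
to be `1`, and then `1 ∈ E^⊕`, contradicting `m < 1`. It is onto `[m, 1]`: (LC) makes `φ`
continuous except possibly from the right at `0`, and there (UC) shows that `inf φ((0,1])` eats `m`,
hence lies in `E^⊕`. Finally an isomorphism `Φ` satisfies `Φ s = Φ 1 ⊕_s Φ 0`, so it is determined
by its endpoints, which must be `m` and `1` in some order; this leaves `φ` and `s ↦ φ (1 - s)`.
-/

/-- Iterating `f (μ a) = f (μ b)` gives `f ((a/b)ⁿ b) = f b`, and these points tend to `0`. -/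
theorem MonotoneOn.eq_of_map_mul_eq {f : ℝ → ℝ} {a b : ℝ} (ha : 0 < a) (hab : a < b)
    (hf : MonotoneOn f (Ioc 0 b)) (h : ∀ μ ∈ Ioc (0:ℝ) 1, f (μ * a) = f (μ * b)) :
    ∀ x ∈ Ioc 0 b, f x = f b := by
  have hb : 0 < b := ha.trans hab
  have hr : a / b ∈ Ioo (0:ℝ) 1 := ⟨div_pos ha hb, (div_lt_one hb).2 hab⟩
  have hpow : ∀ n : ℕ, f ((a / b) ^ n * b) = f b := by
    intro n
    induction n with
    | zero => rw [pow_zero, one_mul]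
    | succ n ih =>
      have hμ : (a / b) ^ n ∈ Ioc (0:ℝ) 1 := ⟨pow_pos hr.1 n, pow_le_one₀ hr.1.le hr.2.le⟩
      rw [← ih, ← h _ hμ, pow_succ, mul_assoc, div_mul_cancel₀ a hb.ne']
  intro x hx
  obtain ⟨n, hn⟩ := exists_pow_lt_of_lt_one (div_pos hx.1 hb) hr.2
  have hlt : (a / b) ^ n * b < x := (lt_div_iff₀ hb).1 hn
  have hmem : (a / b) ^ n * b ∈ Ioc 0 b := ⟨by have := hr.1; positivity, hlt.le.trans hx.2⟩
  exact le_antisymm (hf hx ⟨hb, le_rfl⟩ hx.2) ((hpow n).symm.le.trans (hf hmem hx hlt.le))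

theorem AntitoneOn.eq_of_map_mul_eq {f : ℝ → ℝ} {a b : ℝ} (ha : 0 < a) (hab : a < b)
    (hf : AntitoneOn f (Ioc 0 b)) (h : ∀ μ ∈ Ioc (0:ℝ) 1, f (μ * a) = f (μ * b)) :
    ∀ x ∈ Ioc 0 b, f x = f b := fun x hx =>
  neg_inj.1 (hf.neg.eq_of_map_mul_eq ha hab (fun μ hμ => by rw [h μ hμ]) x hx)

namespace UCA

variable (A : UCA) {p q r s t x y z : ℝ}

lemma assoc_param_mem (hp : p ∈ Ioo (0:ℝ) 1) (hq : q ∈ Ioo (0:ℝ) 1) :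
    (1 - p) * q / (1 - p * q) ∈ Ioo (0:ℝ) 1 := by
  obtain ⟨hp0, hp1⟩ := hp
  obtain ⟨hq0, hq1⟩ := hq
  have hpq : 0 < 1 - p * q := by nlinarith
  exact ⟨div_pos (by nlinarith) hpq, (div_lt_one hpq).2 (by nlinarith)⟩

lemma comm_of_mem_Icc (hp : p ∈ Icc (0:ℝ) 1) (hx : x ∈ Icc (0:ℝ) 1) (hy : y ∈ Icc (0:ℝ) 1) :
    A.op p x y = A.op (1 - p) y x := by
  rcases eq_endpoints_or_mem_Ioo_of_mem_Icc hp with rfl | rfl | hp'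
  · rw [sub_zero, A.proj0 x hx y hy, A.proj1 y hy x hx]
  · rw [sub_self, A.proj1 x hx y hy, A.proj0 y hy x hx]
  · exact A.comm p hp' x hx y hy

lemma op_op_right (hp : p ∈ Icc (0:ℝ) 1) (hr : r ∈ Ioo (0:ℝ) 1)
    (hx : x ∈ Icc (0:ℝ) 1) (hy : y ∈ Icc (0:ℝ) 1) :
    A.op r (A.op p x y) y = A.op (p * r) x y := by
  rcases eq_endpoints_or_mem_Ioo_of_mem_Icc hp with rfl | rfl | hp'
  · rw [zero_mul, A.proj0 x hx y hy, A.idem r hr y hy]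
  · rw [one_mul, A.proj1 x hx y hy]
  · rw [A.assoc p hp' r hr x hx y hy y hy, A.idem _ (assoc_param_mem hp' hr) y hy]

lemma op_op_left (hp : p ∈ Ioo (0:ℝ) 1) (hq : q ∈ Icc (0:ℝ) 1)
    (hx : x ∈ Icc (0:ℝ) 1) (hy : y ∈ Icc (0:ℝ) 1) :
    A.op p x (A.op q x y) = A.op (p + q - p * q) x y := by
  have h1p : 1 - p ∈ Ioo (0:ℝ) 1 := ⟨by linarith [hp.2], by linarith [hp.1]⟩
  have h1q : 1 - q ∈ Icc (0:ℝ) 1 := ⟨by linarith [hq.2], by linarith [hq.1]⟩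
  have hprod : (1 - q) * (1 - p) ∈ Icc (0:ℝ) 1 :=
    ⟨mul_nonneg h1q.1 h1p.1.le, mul_le_one₀ h1q.2 h1p.1.le h1p.2.le⟩
  calc A.op p x (A.op q x y) = A.op (1 - p) (A.op (1 - q) y x) x := by
        rw [A.comm p hp x hx _ (A.mem q hq x hx y hy), A.comm_of_mem_Icc hq hx hy]
    _ = A.op ((1 - q) * (1 - p)) y x := A.op_op_right h1q h1p hy hx
    _ = A.op (p + q - p * q) x y := by
        rw [A.comm_of_mem_Icc hprod hy hx]
        ring_nf

lemma op_op_op (hp : p ∈ Ioo (0:ℝ) 1) (hs : s ∈ Icc (0:ℝ) 1) (ht : t ∈ Icc (0:ℝ) 1)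
    (hx : x ∈ Icc (0:ℝ) 1) (hy : y ∈ Icc (0:ℝ) 1) :
    A.op p (A.op s x y) (A.op t x y) = A.op (p * s + (1 - p) * t) x y := by
  have hu : A.op t x y ∈ Icc (0:ℝ) 1 := A.mem t ht x hx y hy
  rcases eq_endpoints_or_mem_Ioo_of_mem_Icc hs with rfl | rfl | hs'
  · have h1p : 1 - p ∈ Ioo (0:ℝ) 1 := ⟨by linarith [hp.2], by linarith [hp.1]⟩
    rw [A.proj0 x hx y hy, A.comm p hp y hy _ hu, A.op_op_right ht h1p hx hy]
    ring_nf
  · rw [A.proj1 x hx y hy, A.op_op_left hp ht hx hy]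
    ring_nf
  · set v := (1 - s) * p / (1 - s * p) with hv
    have hv_mem : v ∈ Ioo (0:ℝ) 1 := assoc_param_mem hs' hp
    have h1v : 1 - v ∈ Ioo (0:ℝ) 1 := ⟨by linarith [hv_mem.2], by linarith [hv_mem.1]⟩
    have hsp : s * p ∈ Ioo (0:ℝ) 1 :=
      ⟨mul_pos hs'.1 hp.1, by nlinarith [hs'.1, hs'.2, hp.1, hp.2]⟩
    have htv : t * (1 - v) ∈ Icc (0:ℝ) 1 :=
      ⟨mul_nonneg ht.1 h1v.1.le, mul_le_one₀ ht.2 h1v.1.le h1v.2.le⟩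
    rw [A.assoc s hs' p hp x hx y hy _ hu, ← hv, A.comm v hv_mem y hy _ hu,
      A.op_op_right ht h1v hx hy, A.op_op_left hsp htv hx hy]
    have hsp' : 1 - s * p ≠ 0 := by linarith [hsp.2]
    congr 1
    rw [hv]
    field_simp
    ring

lemma op_le_op_right (hMO : A.MO) (hp : p ∈ Ioo (0:ℝ) 1) (hx : x ∈ Icc (0:ℝ) 1)
    (hy : y ∈ Icc (0:ℝ) 1) (hz : z ∈ Icc (0:ℝ) 1) (hyz : y ≤ z) :
    A.op p x y ≤ A.op p x z := by
  rw [A.comm p hp x hx y hy, A.comm p hp x hx z hz]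
  exact hMO y hy z hz x hx (1 - p) ⟨by linarith [hp.2], by linarith [hp.1]⟩ hyz

lemma op_mem_uIcc (hMO : A.MO) (hp : p ∈ Ioo (0:ℝ) 1) (hx : x ∈ Icc (0:ℝ) 1)
    (hy : y ∈ Icc (0:ℝ) 1) : A.op p x y ∈ uIcc x y := by
  rcases le_total x y with hxy | hyx
  · rw [uIcc_of_le hxy]
    refine ⟨?_, ?_⟩
    · calc x = A.op p x x := (A.idem p hp x hx).symm
        _ ≤ A.op p x y := A.op_le_op_right hMO hp hx hx hy hxy
    · calc A.op p x y ≤ A.op p y y := hMO x hx y hy y hy p hp hxy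
        _ = y := A.idem p hp y hy
  · rw [uIcc_of_ge hyx]
    refine ⟨?_, ?_⟩
    · calc y = A.op p y y := (A.idem p hp y hy).symm
        _ ≤ A.op p x y := hMO y hy x hx y hy p hp hyx
    · calc A.op p x y ≤ A.op p x x := A.op_le_op_right hMO hp hx hy hx hyx
        _ = x := A.idem p hp x hx

lemma eats_of_forall_Ioo (hy : y ∈ Icc (0:ℝ) 1) (hx : x ∈ Icc (0:ℝ) 1)
    (h : ∀ t ∈ Ioo (0:ℝ) 1, A.op t y x = y) : A.Eats y x := by
  intro t ht
  rcases ht.2.eq_or_lt with rfl | ht1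
  · exact A.proj1 y hy x hx
  · exact h t ⟨ht.1, ht1⟩

/-- `y ⊕_t 0 = (y ⊕_½ x) ⊕_t 0 = y ⊕_{t/2} (x ⊕_u 0) = y ⊕_{t/2} x = y`. -/
lemma mem_E_of_eats (hy : y ∈ Icc (0:ℝ) 1) (hyx : A.Eats y x) (hx : x ∈ A.E) : y ∈ A.E := by
  have h0 : (0:ℝ) ∈ Icc (0:ℝ) 1 := ⟨le_rfl, zero_le_one⟩
  refine ⟨hy, A.eats_of_forall_Ioo hy h0 fun t ht => ?_⟩
  have hhalf : (2:ℝ)⁻¹ ∈ Ioo (0:ℝ) 1 := by norm_num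
  calc A.op t y 0 = A.op t (A.op 2⁻¹ y x) 0 := by rw [hyx 2⁻¹ (Ioo_subset_Ioc_self hhalf)]
    _ = A.op (2⁻¹ * t) y (A.op ((1 - 2⁻¹) * t / (1 - 2⁻¹ * t)) x 0) :=
        A.assoc _ hhalf t ht y hy x hx.1 0 h0
    _ = A.op (2⁻¹ * t) y x := by
        rw [hx.2 _ (Ioo_subset_Ioc_self (assoc_param_mem hhalf ht))]
    _ = y := hyx _ ⟨mul_pos hhalf.1 ht.1, by nlinarith [ht.2]⟩

lemma E_bddAbove : BddAbove A.E := bddAbove_Icc.mono fun _ hy => hy.1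

lemma zero_mem_E : (0:ℝ) ∈ A.E :=
  have h0 : (0:ℝ) ∈ Icc (0:ℝ) 1 := ⟨le_rfl, zero_le_one⟩
  ⟨h0, A.eats_of_forall_Ioo h0 h0 fun t ht => A.idem t ht 0 h0⟩

lemma sSup_E_mem_Icc : sSup A.E ∈ Icc (0:ℝ) 1 :=
  ⟨le_csSup A.E_bddAbove A.zero_mem_E, csSup_le ⟨0, A.zero_mem_E⟩ fun _ hy => hy.1.2⟩

lemma sSup_E_mem (hMO : A.MO) : sSup A.E ∈ A.E := by
  have hm := A.sSup_E_mem_Icc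
  have h0 : (0:ℝ) ∈ Icc (0:ℝ) 1 := ⟨le_rfl, zero_le_one⟩
  refine ⟨hm, A.eats_of_forall_Ioo hm h0 fun t ht => le_antisymm ?_ ?_⟩
  · have := A.op_mem_uIcc hMO ht hm h0
    rw [uIcc_of_ge hm.1] at this
    exact this.2
  · refine csSup_le ⟨0, A.zero_mem_E⟩ fun e he => ?_
    calc e = A.op t e 0 := (he.2 t (Ioo_subset_Ioc_self ht)).symm
      _ ≤ A.op t (sSup A.E) 0 := hMO e he.1 _ hm 0 h0 t ht (le_csSup A.E_bddAbove he)

lemma le_of_forall_op_le (hLC : A.LC) (hx : x ∈ Icc (0:ℝ) 1) (hy : y ∈ Icc (0:ℝ) 1)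
    (hxy : x ≤ y) (h : ∀ p ∈ Ioo (0:ℝ) 1, A.op p y x ≤ z) : y ≤ z := by
  have hev : ∀ᶠ p in 𝓝[<] (1:ℝ), p ∈ Ioo (0:ℝ) 1 := Ioo_mem_nhdsLT zero_lt_one
  refine (hLC x hx y hy hxy).trans (liminf_le_of_frequently_le (hev.mono h).frequently ?_)
  exact isBoundedUnder_of_eventually_ge
    (hev.mono fun p hp => (A.mem p (Ioo_subset_Icc_self hp) y hy x hx).1)

lemma le_op_of_eventually_le (hUC : A.UC) (hx : x ∈ Ico (0:ℝ) 1) (hy : y ∈ Ico (0:ℝ) 1)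
    (hp : p ∈ Ioo (0:ℝ) 1) (h : ∀ᶠ ε in 𝓝[>] (0:ℝ), z ≤ A.op p (x + ε) (y + ε)) :
    z ≤ A.op p x y := by
  refine (le_limsup_of_frequently_le h.frequently ?_).trans (hUC x hx y hy p hp)
  have hδ : (0:ℝ) < min (1 - x) (1 - y) := lt_min (by linarith [hx.2]) (by linarith [hy.2])
  refine isBoundedUnder_of_eventually_le (a := 1) ?_
  filter_upwards [Ioo_mem_nhdsGT hδ] with ε hε
  have hεx := min_le_left (1 - x) (1 - y)
  have hεy := min_le_right (1 - x) (1 - y)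
  exact (A.mem p (Ioo_subset_Icc_self hp) _ ⟨by linarith [hx.1, hε.1], by linarith [hε.2]⟩
    _ ⟨by linarith [hy.1, hε.1], by linarith [hε.2]⟩).2

noncomputable def phi (s : ℝ) : ℝ := A.op s 1 (sSup A.E)

lemma phi_zero : A.phi 0 = sSup A.E := A.proj0 1 ⟨zero_le_one, le_rfl⟩ _ A.sSup_E_mem_Icc

lemma phi_one : A.phi 1 = 1 := A.proj1 1 ⟨zero_le_one, le_rfl⟩ _ A.sSup_E_mem_Icc

lemma phi_mem (hMO : A.MO) (hs : s ∈ Icc (0:ℝ) 1) : A.phi s ∈ Icc (sSup A.E) 1 := by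
  have hm := A.sSup_E_mem_Icc
  rcases eq_endpoints_or_mem_Ioo_of_mem_Icc hs with rfl | rfl | hs'
  · rw [phi_zero]; exact ⟨le_rfl, hm.2⟩
  · rw [phi_one]; exact ⟨hm.2, le_rfl⟩
  · rw [← uIcc_of_ge hm.2]
    exact A.op_mem_uIcc hMO hs' ⟨zero_le_one, le_rfl⟩ hm

lemma phi_mem_Icc (hMO : A.MO) (hs : s ∈ Icc (0:ℝ) 1) : A.phi s ∈ Icc (0:ℝ) 1 :=
  ⟨A.sSup_E_mem_Icc.1.trans (A.phi_mem hMO hs).1, (A.phi_mem hMO hs).2⟩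

lemma phi_hom (hp : p ∈ Ioo (0:ℝ) 1) (hs : s ∈ Icc (0:ℝ) 1) (ht : t ∈ Icc (0:ℝ) 1) :
    A.phi (p * s + (1 - p) * t) = A.op p (A.phi s) (A.phi t) :=
  (A.op_op_op hp hs ht ⟨zero_le_one, le_rfl⟩ A.sSup_E_mem_Icc).symm

lemma phi_mul (hp : p ∈ Ioo (0:ℝ) 1) (hs : s ∈ Icc (0:ℝ) 1) :
    A.phi (p * s) = A.op p (A.phi s) (sSup A.E) := by
  simpa [phi_zero] using A.phi_hom hp hs ⟨le_rfl, zero_le_one⟩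

lemma phi_monotoneOn (hMO : A.MO) : MonotoneOn A.phi (Icc (0:ℝ) 1) := by
  intro a ha b hb hab
  rcases ha.1.eq_or_lt with rfl | ha0
  · rw [phi_zero]; exact (A.phi_mem hMO hb).1
  rcases hab.eq_or_lt with rfl | hab
  · exact le_rfl
  have hb0 : 0 < b := ha0.trans hab
  have hμ : a / b ∈ Ioo (0:ℝ) 1 := ⟨div_pos ha0 hb0, (div_lt_one hb0).2 hab⟩
  have hφb := A.phi_mem hMO hb
  have h := A.op_mem_uIcc hMO hμ (A.phi_mem_Icc hMO hb) A.sSup_E_mem_Icc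
  rw [uIcc_of_ge hφb.1, ← A.phi_mul hμ hb, div_mul_cancel₀ a hb0.ne'] at h
  exact h.2

lemma phi_affine_congr {a b : ℝ} (hab : A.phi a = A.phi b)
    (ha : a ∈ Icc (0:ℝ) 1) (hb : b ∈ Icc (0:ℝ) 1) (hp : p ∈ Icc (0:ℝ) 1)
    (ht : t ∈ Icc (0:ℝ) 1) :
    A.phi (p * a + (1 - p) * t) = A.phi (p * b + (1 - p) * t) := by
  rcases eq_endpoints_or_mem_Ioo_of_mem_Icc hp with rfl | rfl | hp'
  · simp
  · simpa using hab
  · rw [A.phi_hom hp' ha ht, A.phi_hom hp' hb ht, hab]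

lemma phi_ne_of_lt (hMO : A.MO) (hLC : A.LC) (hmax : sSup A.E < 1) {a b : ℝ} (ha : 0 < a)
    (hab : a < b) (hb : b < 1) : A.phi a ≠ A.phi b := by
  intro h
  have hm := A.sSup_E_mem_Icc
  have h1 : (1:ℝ) ∈ Icc (0:ℝ) 1 := ⟨zero_le_one, le_rfl⟩
  have ha' : a ∈ Icc (0:ℝ) 1 := ⟨ha.le, by linarith⟩
  have hb' : b ∈ Icc (0:ℝ) 1 := ⟨by linarith, hb.le⟩
  have hmono := A.phi_monotoneOn hMO
  have hleft : ∀ x ∈ Ioc 0 b, A.phi x = A.phi b := by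
    refine (hmono.mono fun x hx => ⟨hx.1.le, hx.2.trans hb.le⟩).eq_of_map_mul_eq ha hab
      fun μ hμ => ?_
    simpa using A.phi_affine_congr h ha' hb' (Ioc_subset_Icc_self hμ) ⟨le_rfl, zero_le_one⟩
  have hright : ∀ x ∈ Ioc 0 (1 - a), A.phi (1 - x) = A.phi a := by
    have hanti : AntitoneOn (fun x => A.phi (1 - x)) (Ioc 0 (1 - a)) := fun x hx y hy hxy =>
      hmono ⟨by linarith [hy.2], by linarith [hy.1]⟩ ⟨by linarith [hx.2], by linarith [hx.1]⟩
        (by linarith)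
    have := hanti.eq_of_map_mul_eq (a := 1 - b) (by linarith) (by linarith) fun μ hμ => by
      have := A.phi_affine_congr h.symm hb' ha' (Ioc_subset_Icc_self hμ) h1
      convert this using 2 <;> ring
    simpa using this
  have hgt : ∀ r ∈ Ioo (0:ℝ) 1, b < r → A.phi r = A.phi a := fun r hr hbr => by
    simpa using hright (1 - r) ⟨by linarith [hr.2], by linarith⟩
  have hφa : A.phi a = 1 := by
    refine le_antisymm (A.phi_mem hMO ha').2 (A.le_of_forall_op_le hLC hm h1 hm.2 fun r hr => ?_)
    rcases le_or_gt r b with hrb | hbr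
    · exact h ▸ hmono (Ioo_subset_Icc_self hr) hb' hrb
    · exact (hgt r hr hbr).le
  have heats : A.Eats 1 (sSup A.E) := A.eats_of_forall_Ioo h1 hm fun t ht => by
    change A.phi t = 1
    rcases le_or_gt t b with htb | hbt
    · rw [← hφa, h]; exact hleft t ⟨ht.1, htb⟩
    · rw [← hφa]; exact hgt t ht hbt
  have := le_csSup A.E_bddAbove (A.mem_E_of_eats h1 heats (A.sSup_E_mem hMO))
  linarith

lemma phi_strictMonoOn (hMO : A.MO) (hLC : A.LC) (hmax : sSup A.E < 1) :
    StrictMonoOn A.phi (Icc (0:ℝ) 1) := by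
  intro a ha b hb hab
  have hmono := A.phi_monotoneOn hMO
  refine (hmono ha hb hab.le).lt_of_ne fun h => ?_
  have ha' : (2 * a + b) / 3 ∈ Icc (0:ℝ) 1 := ⟨by linarith [ha.1], by linarith [hb.2]⟩
  have hb' : (a + 2 * b) / 3 ∈ Icc (0:ℝ) 1 := ⟨by linarith [ha.1], by linarith [hb.2]⟩
  refine A.phi_ne_of_lt hMO hLC hmax (by linarith [ha.1]) (by linarith) (by linarith [hb.2])
    (le_antisymm (hmono ha' hb' (by linarith)) ?_)
  calc A.phi ((a + 2 * b) / 3) ≤ A.phi b := hmono hb' hb (by linarith)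
    _ = A.phi a := h.symm
    _ ≤ A.phi ((2 * a + b) / 3) := hmono ha ha' (by linarith)

/-- By (UC), `d = inf φ((0,1])` eats `m = max E^⊕`: `d ≤ φ (t s) = φ s ⊕_t m ≤ (d + ε) ⊕_t (m + ε)`
for `s` with `φ s < d + ε`. -/
lemma sInf_phi_mem_E (hMO : A.MO) (hUC : A.UC) : sInf (A.phi '' Ioc 0 1) ∈ A.E := by
  set d := sInf (A.phi '' Ioc 0 1)
  have hm := A.sSup_E_mem_Icc
  have hne : (A.phi '' Ioc 0 1).Nonempty := ⟨_, mem_image_of_mem _ ⟨zero_lt_one, le_rfl⟩⟩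
  have hd_le : ∀ s ∈ Ioc (0:ℝ) 1, d ≤ A.phi s := fun s hs =>
    csInf_le ⟨sSup A.E, forall_mem_image.2 fun s hs => (A.phi_mem hMO (Ioc_subset_Icc_self hs)).1⟩
      (mem_image_of_mem _ hs)
  have hmd : sSup A.E ≤ d :=
    le_csInf hne (forall_mem_image.2 fun s hs => (A.phi_mem hMO (Ioc_subset_Icc_self hs)).1)
  have hd1 : d ≤ 1 := (hd_le 1 ⟨zero_lt_one, le_rfl⟩).trans_eq A.phi_one
  have hd : d ∈ Icc (0:ℝ) 1 := ⟨hm.1.trans hmd, hd1⟩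
  refine A.mem_E_of_eats hd (A.eats_of_forall_Ioo hd hm fun t ht => le_antisymm ?_ ?_)
    (A.sSup_E_mem hMO)
  · have := A.op_mem_uIcc hMO ht hd hm
    rw [uIcc_of_ge hmd] at this
    exact this.2
  rcases hd1.eq_or_lt with hd1 | hd1
  · calc d ≤ A.phi t := hd_le t (Ioo_subset_Ioc_self ht)
      _ = A.op t d (sSup A.E) := by rw [hd1]; rfl
  refine A.le_op_of_eventually_le hUC ⟨hd.1, hd1⟩ ⟨hm.1, hmd.trans_lt hd1⟩ ht ?_
  filter_upwards [Ioo_mem_nhdsGT (sub_pos.2 hd1)] with ε hε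
  obtain ⟨_, ⟨s, hs, rfl⟩, hsε⟩ := exists_lt_of_csInf_lt hne (lt_add_of_pos_right d hε.1)
  have hs' := Ioc_subset_Icc_self hs
  have hdε : d + ε ∈ Icc (0:ℝ) 1 := ⟨by linarith [hd.1, hε.1], by linarith [hε.2]⟩
  calc d ≤ A.phi (t * s) := hd_le _ ⟨mul_pos ht.1 hs.1, mul_le_one₀ ht.2.le hs.1.le hs.2⟩
    _ = A.op t (A.phi s) (sSup A.E) := A.phi_mul ht hs'
    _ ≤ A.op t (d + ε) (sSup A.E) := hMO _ (A.phi_mem_Icc hMO hs') _ hdε _ hm t ht hsε.le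
    _ ≤ A.op t (d + ε) (sSup A.E + ε) := A.op_le_op_right hMO ht hdε hm
        ⟨by linarith [hm.1, hε.1], by linarith [hε.2]⟩ (by linarith [hε.1])

lemma le_sSup_E_of_forall_le_phi (hMO : A.MO) (hUC : A.UC)
    (h : ∀ s ∈ Ioc (0:ℝ) 1, y ≤ A.phi s) : y ≤ sSup A.E := by
  have hne : (A.phi '' Ioc 0 1).Nonempty := ⟨_, mem_image_of_mem _ ⟨zero_lt_one, le_rfl⟩⟩
  have hyd : y ≤ sInf (A.phi '' Ioc 0 1) := le_csInf hne (forall_mem_image.2 h)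
  exact hyd.trans (le_csSup A.E_bddAbove (A.sInf_phi_mem_E hMO hUC))

lemma phi_le_of_forall_Ioo_le (hMO : A.MO) (hLC : A.LC) (hq : q ∈ Ioc (0:ℝ) 1)
    (h : ∀ s ∈ Ioo 0 q, A.phi s ≤ y) : A.phi q ≤ y := by
  have hq' := Ioc_subset_Icc_self hq
  refine A.le_of_forall_op_le hLC A.sSup_E_mem_Icc (A.phi_mem_Icc hMO hq') (A.phi_mem hMO hq').1
    fun r hr => ?_
  rw [← A.phi_mul hr hq']
  exact h _ ⟨mul_pos hr.1 hq.1, mul_lt_of_lt_one_left hq.1 hr.2⟩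

lemma le_phi_of_forall_Ioc_le (hMO : A.MO) (hUC : A.UC) (hLC : A.LC) (hq : q ∈ Ico (0:ℝ) 1)
    (hy : y ∈ Icc (sSup A.E) 1) (h : ∀ s ∈ Ioc q 1, y ≤ A.phi s) : y ≤ A.phi q := by
  have hm := A.sSup_E_mem_Icc
  rcases hq.1.eq_or_lt with rfl | hq0
  · rw [phi_zero]; exact A.le_sSup_E_of_forall_le_phi hMO hUC h
  have hq' : q ∈ Icc (0:ℝ) 1 := Ico_subset_Icc_self hq
  have hy' : y ∈ Icc (0:ℝ) 1 := ⟨hm.1.trans hy.1, hy.2⟩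
  refine A.le_of_forall_op_le hLC hm hy' hy.1 fun p hp => ?_
  set s := min 1 (q / p)
  have hqs : q < s := lt_min hq.2 ((lt_div_iff₀ hp.1).2 (mul_lt_of_lt_one_right hq0 hp.2))
  have hs : s ∈ Icc (0:ℝ) 1 := ⟨hq0.le.trans hqs.le, min_le_left _ _⟩
  have hps : p * s ≤ q := by
    calc p * s ≤ p * (q / p) := mul_le_mul_of_nonneg_left (min_le_right _ _) hp.1.le
      _ = q := mul_div_cancel₀ q hp.1.ne'
  calc A.op p y (sSup A.E) ≤ A.op p (A.phi s) (sSup A.E) :=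
        hMO y hy' _ (A.phi_mem_Icc hMO hs) _ hm p hp (h s ⟨hqs, hs.2⟩)
    _ = A.phi (p * s) := (A.phi_mul hp hs).symm
    _ ≤ A.phi q := A.phi_monotoneOn hMO
        ⟨mul_nonneg hp.1.le hs.1, hps.trans hq'.2⟩ hq' hps

/-- The preimage of `y` is `sup {s | φ s ≤ y}`. -/
lemma phi_surjOn (hMO : A.MO) (hUC : A.UC) (hLC : A.LC) :
    SurjOn A.phi (Icc (0:ℝ) 1) (Icc (sSup A.E) 1) := by
  intro y hy
  set S := {s ∈ Icc (0:ℝ) 1 | A.phi s ≤ y}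
  have h0S : (0:ℝ) ∈ S := ⟨⟨le_rfl, zero_le_one⟩, A.phi_zero ▸ hy.1⟩
  have hbdd : BddAbove S := bddAbove_Icc.mono fun _ hs => hs.1
  have hq : sSup S ∈ Icc (0:ℝ) 1 := ⟨le_csSup hbdd h0S, csSup_le ⟨0, h0S⟩ fun _ hs => hs.1.2⟩
  refine ⟨sSup S, hq, le_antisymm ?_ ?_⟩
  · rcases hq.1.eq_or_lt with h | hq0
    · rw [← h, phi_zero]; exact hy.1
    refine A.phi_le_of_forall_Ioo_le hMO hLC ⟨hq0, hq.2⟩ fun s hs => ?_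
    obtain ⟨s', hs'S, hss'⟩ := exists_lt_of_lt_csSup ⟨0, h0S⟩ hs.2
    exact (A.phi_monotoneOn hMO ⟨hs.1.le, hss'.le.trans hs'S.1.2⟩ hs'S.1 hss'.le).trans hs'S.2
  · rcases hq.2.eq_or_lt with h | hq1
    · rw [h, phi_one]; exact hy.2
    refine A.le_phi_of_forall_Ioc_le hMO hUC hLC ⟨hq.1, hq1⟩ hy fun s hs => ?_
    by_contra! hlt
    exact (le_csSup hbdd ⟨⟨hq.1.trans hs.1.le, hs.2⟩, hlt.le⟩).not_gt hs.1

lemma phi_isStdIso (hMO : A.MO) (hUC : A.UC) (hLC : A.LC) (hmax : sSup A.E < 1) :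
    A.IsStdIso (sSup A.E) A.phi :=
  ⟨⟨fun _ hs => A.phi_mem hMO hs, (A.phi_strictMonoOn hMO hLC hmax).injOn,
    A.phi_surjOn hMO hUC hLC⟩, fun _ hp _ hs _ ht => A.phi_hom hp hs ht⟩

namespace IsStdIso

variable {A} {m : ℝ} {Φ : ℝ → ℝ}

lemma comp_one_sub (hΦ : A.IsStdIso m Φ) : A.IsStdIso m (fun s => Φ (1 - s)) := by
  have hmaps : MapsTo (fun s : ℝ => 1 - s) (Icc 0 1) (Icc 0 1) := fun s hs =>
    ⟨by linarith [hs.2], by linarith [hs.1]⟩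
  have hinv : InvOn (fun s : ℝ => 1 - s) (fun s => 1 - s) (Icc 0 1) (Icc 0 1) :=
    ⟨fun s _ => sub_sub_cancel 1 s, fun s _ => sub_sub_cancel 1 s⟩
  refine ⟨hΦ.1.comp (hinv.bijOn hmaps hmaps), fun p hp s hs t ht => ?_⟩
  rw [← hΦ.2 p hp _ (hmaps hs) _ (hmaps ht)]
  ring_nf

lemma apply_eq_op (hΦ : A.IsStdIso m Φ) (hs : s ∈ Ioo (0:ℝ) 1) : Φ s = A.op s (Φ 1) (Φ 0) := by
  simpa using hΦ.2 s hs 1 ⟨zero_le_one, le_rfl⟩ 0 ⟨le_rfl, zero_le_one⟩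

/-- By (MO), `Φ` maps `[0,1]` into the interval between `Φ 0` and `Φ 1`. -/
lemma endpoints (hMO : A.MO) (hm : 0 ≤ m) (hΦ : A.IsStdIso m Φ) :
    Φ 0 = m ∧ Φ 1 = 1 ∨ Φ 0 = 1 ∧ Φ 1 = m := by
  have h0 := hΦ.1.mapsTo ⟨le_rfl, zero_le_one⟩
  have h1 := hΦ.1.mapsTo ⟨zero_le_one, le_rfl⟩
  have hsub : Φ '' Icc 0 1 ⊆ uIcc (Φ 0) (Φ 1) := by
    rintro _ ⟨s, hs, rfl⟩
    rcases eq_endpoints_or_mem_Ioo_of_mem_Icc hs with rfl | rfl | hs'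
    · exact left_mem_uIcc
    · exact right_mem_uIcc
    · rw [hΦ.apply_eq_op hs', uIcc_comm]
      exact A.op_mem_uIcc hMO hs' ⟨hm.trans h1.1, h1.2⟩ ⟨hm.trans h0.1, h0.2⟩
  have heq : Icc (min (Φ 0) (Φ 1)) (max (Φ 0) (Φ 1)) = Icc m 1 :=
    (uIcc_subset_Icc h0 h1).antisymm (hΦ.1.image_eq ▸ hsub)
  obtain ⟨hmin, hmax⟩ := (Icc_eq_Icc_iff min_le_max).1 heq
  rcases le_total (Φ 0) (Φ 1) with h | h
  · exact Or.inl ⟨(min_eq_left h).symm.trans hmin, (max_eq_right h).symm.trans hmax⟩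
  · exact Or.inr ⟨(max_eq_left h).symm.trans hmax, (min_eq_right h).symm.trans hmin⟩

lemma eqOn_phi (hΦ : A.IsStdIso m Φ) (h0 : Φ 0 = sSup A.E) (h1 : Φ 1 = 1) :
    EqOn Φ A.phi (Icc 0 1) := by
  intro s hs
  rcases eq_endpoints_or_mem_Ioo_of_mem_Icc hs with rfl | rfl | hs'
  · rw [h0, phi_zero]
  · rw [h1, phi_one]
  · rw [hΦ.apply_eq_op hs', h0, h1]; rfl

end IsStdIso

end UCA

/-- Theorem 3.7(i): let `⟨[0,1], ⊕_p⟩` be a convex algebra satisfying (MO), (UC), (LC)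
with `max E^⊕ < 1` (the maximum of the closed nonempty set `E^⊕` is its supremum).
Then `[max E^⊕, 1]` is closed under the operations `⊕_p`, and there are exactly two
isomorphisms of `⟨[0,1], +_p⟩` onto `⟨[max E^⊕, 1], ⊕_p⟩`, one strictly increasing
and one strictly decreasing. -/
theorem stmt_15 (A : UCA) (hMO : A.MO) (hUC : A.UC) (hLC : A.LC)
    (hmax : sSup A.E < 1) :
    (∀ p ∈ Set.Ioo (0:ℝ) 1, ∀ x ∈ Set.Icc (sSup A.E) 1, ∀ y ∈ Set.Icc (sSup A.E) 1,
        A.op p x y ∈ Set.Icc (sSup A.E) 1) ∧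
    ∃ Φ₁ Φ₂ : ℝ → ℝ,
      A.IsStdIso (sSup A.E) Φ₁ ∧ A.IsStdIso (sSup A.E) Φ₂ ∧
      StrictMonoOn Φ₁ (Set.Icc (0:ℝ) 1) ∧ StrictAntiOn Φ₂ (Set.Icc (0:ℝ) 1) ∧
      ∀ Φ : ℝ → ℝ, A.IsStdIso (sSup A.E) Φ →
        (Set.EqOn Φ Φ₁ (Set.Icc (0:ℝ) 1) ∨ Set.EqOn Φ Φ₂ (Set.Icc (0:ℝ) 1)) := by
  have hm := A.sSup_E_mem_Icc
  have hφ := A.phi_isStdIso hMO hUC hLC hmax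
  have hmono := A.phi_strictMonoOn hMO hLC hmax
  refine ⟨fun p hp x hx y hy => uIcc_subset_Icc hx hy
      (A.op_mem_uIcc hMO hp ⟨hm.1.trans hx.1, hx.2⟩ ⟨hm.1.trans hy.1, hy.2⟩),
    A.phi, fun s => A.phi (1 - s), hφ, hφ.comp_one_sub, hmono,
    fun a ha b hb hab => hmono ⟨by linarith [hb.2], by linarith [hb.1]⟩
      ⟨by linarith [ha.2], by linarith [ha.1]⟩ (by linarith), fun Φ hΦ => ?_⟩
  rcases hΦ.endpoints hMO hm.1 with ⟨h0, h1⟩ | ⟨h0, h1⟩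
  · exact Or.inl (hΦ.eqOn_phi h0 h1)
  · refine Or.inr fun s hs => ?_
    have := hΦ.comp_one_sub.eqOn_phi (by simpa using h1) (by simpa using h0)
      (⟨by linarith [hs.2], by linarith [hs.1]⟩ : 1 - s ∈ Icc (0:ℝ) 1)
    simpa using this
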